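/- arXiv:1312.1145 — 2 statements merged into one kernel-verified Lean document; each statement's English description precedes it below -/
import Mathlib

section
/- Fix x > ε > 0. Then e^{-kx} · Σ_{j ≥ εk} (kx)^j/j! → 1 as k → ∞. Fix 0 < x < ε. Then e^{-kx} · Σ_{j ≥ εk} (kx)^j/j! → 0 as k → ∞. -/
/-!
The sum is `poissonMass (k * x) {j | ε * k ≤ j}`, the probability that a Poisson variable of mean
`k x` is at least `ε k`. Both limits come from one exponential Chernoff estimate with the tilt
`θ = log (ε / x)`: it bounds the Poisson mass of `{j ≥ ε k}` when `x < ε` (then `θ > 0`) and of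
`{j < ε k}` when `ε < x` (then `θ < 0`) by `exp (k (ε - x - ε log (ε / x)))`, and the exponent
is negative whenever `x ≠ ε`.
-/

open Real Filter Topology

noncomputable def poissonMass (r : ℝ) (s : Set ℕ) : ℝ :=
  exp (-r) * ∑' j : s, r ^ (j : ℕ) / ((j : ℕ).factorial : ℝ)

lemma hasSum_pow_div_factorial_exp (y : ℝ) :
    HasSum (fun n : ℕ => y ^ n / (n.factorial : ℝ)) (exp y) := by
  rw [exp_eq_exp_ℝ]
  exact NormedSpace.expSeries_div_hasSum_exp y

lemma poissonMass_add_poissonMass_compl (r : ℝ) (s : Set ℕ) :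
    poissonMass r s + poissonMass r sᶜ = 1 := by
  have h := hasSum_pow_div_factorial_exp r
  rw [poissonMass, poissonMass, ← mul_add, h.summable.tsum_subtype_add_tsum_subtype_compl,
    h.tsum_eq, ← exp_add, neg_add_cancel, exp_zero]

lemma poissonMass_nonneg {r : ℝ} (hr : 0 ≤ r) (s : Set ℕ) : 0 ≤ poissonMass r s :=
  mul_nonneg (exp_nonneg _) (tsum_nonneg fun _ => by positivity)

/-- Chernoff bound: weighting the `j`-th term by `exp (θ * (j - a)) ≥ 1` and summing over all of
`ℕ` gives `exp (-θ * a)` times the exponential series at `r * exp θ`. -/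
lemma poissonMass_le_exp {r θ a : ℝ} (hr : 0 ≤ r) {s : Set ℕ} (hs : ∀ j ∈ s, θ * a ≤ θ * j) :
    poissonMass r s ≤ exp (r * (exp θ - 1) - θ * a) := by
  set g : ℕ → ℝ := fun j => exp (-(θ * a)) * ((r * exp θ) ^ j / (j.factorial : ℝ))
  have hg : HasSum g (exp (-(θ * a)) * exp (r * exp θ)) :=
    (hasSum_pow_div_factorial_exp _).mul_left _
  have hterm : ∀ j : s, r ^ (j : ℕ) / ((j : ℕ).factorial : ℝ) ≤ g j := by
    rintro ⟨j, hj⟩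
    have hexp : 1 ≤ exp (-(θ * a)) * exp (j * θ) := by
      rw [← exp_add]
      exact one_le_exp (by linarith [hs j hj])
    calc r ^ j / (j.factorial : ℝ)
        ≤ (exp (-(θ * a)) * exp (j * θ)) * (r ^ j / (j.factorial : ℝ)) :=
          le_mul_of_one_le_left (by positivity) hexp
      _ = g j := by simp only [g, mul_pow, exp_nat_mul]; ring
  have hsub : ∑' j : s, r ^ (j : ℕ) / ((j : ℕ).factorial : ℝ) ≤ ∑' j, g j :=
    calc ∑' j : s, r ^ (j : ℕ) / ((j : ℕ).factorial : ℝ)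
        ≤ ∑' j : s, g j :=
          Summable.tsum_le_tsum hterm
            ((hasSum_pow_div_factorial_exp r).summable.subtype s) (hg.summable.subtype s)
      _ ≤ ∑' j, g j := hg.summable.tsum_subtype_le g s fun _ => by positivity
  calc poissonMass r s ≤ exp (-r) * (exp (-(θ * a)) * exp (r * exp θ)) := by
        rw [← hg.tsum_eq]; exact mul_le_mul_of_nonneg_left hsub (exp_nonneg _)
    _ = exp (r * (exp θ - 1) - θ * a) := by
        rw [← exp_add, ← exp_add]; ring_nf

lemma sub_lt_mul_log_div {x ε : ℝ} (hx : 0 < x) (hε : 0 < ε) (hne : x ≠ ε) :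
    ε - x < ε * log (ε / x) := by
  have h := log_lt_sub_one_of_pos (div_pos hx hε) (by rwa [Ne, div_eq_one_iff_eq hε.ne'])
  rw [show log (x / ε) = -log (ε / x) by rw [← log_inv, inv_div]] at h
  have : ε * (x / ε - 1) = x - ε := by field_simp
  nlinarith

lemma tendsto_poissonMass_natCast_mul_zero {x ε : ℝ} (hx : 0 < x) (hε : 0 < ε) (hne : x ≠ ε)
    {s : ℕ → Set ℕ} (hs : ∀ k, ∀ j ∈ s k, log (ε / x) * (ε * k) ≤ log (ε / x) * j) :
    Tendsto (fun k : ℕ => poissonMass (k * x) (s k)) atTop (𝓝 0) := by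
  set c := ε - x - ε * log (ε / x)
  have hc : c < 0 := by linarith [sub_lt_mul_log_div hx hε hne]
  have hbound : ∀ k : ℕ, poissonMass (k * x) (s k) ≤ exp c ^ k := fun k =>
    calc poissonMass (k * x) (s k)
        ≤ exp (k * x * (exp (log (ε / x)) - 1) - log (ε / x) * (ε * k)) :=
          poissonMass_le_exp (by positivity) (hs k)
      _ = exp c ^ k := by
          rw [exp_log (div_pos hε hx), ← exp_nat_mul]
          congr 1
          field_simp
          ring
  exact squeeze_zero (fun k => poissonMass_nonneg (by positivity) _) hbound
    (tendsto_pow_atTop_nhds_zero_of_lt_one (exp_nonneg c) (exp_lt_one_iff.2 hc))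

/-- The model partial density `e^{-kx} Σ_{j ≥ εk} (kx)^j/j!` tends to `1` as
`k → ∞` when `x > ε > 0`, and tends to `0` when `0 < x < ε`. -/
theorem model_partial_density_limits (x ε : ℝ) :
    (0 < ε → ε < x →
      Tendsto (fun k : ℕ => Real.exp (-(k * x)) *
          ∑' j : {j : ℕ // ε * k ≤ (j : ℝ)}, (k * x) ^ (j : ℕ) / ((j : ℕ).factorial : ℝ))
        atTop (nhds 1)) ∧
    (0 < x → x < ε →
      Tendsto (fun k : ℕ => Real.exp (-(k * x)) *
          ∑' j : {j : ℕ // ε * k ≤ (j : ℝ)}, (k * x) ^ (j : ℕ) / ((j : ℕ).factorial : ℝ))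
        atTop (nhds 0)) := by
  change (0 < ε → ε < x →
      Tendsto (fun k : ℕ => poissonMass (k * x) {j | ε * k ≤ j}) atTop (𝓝 1)) ∧
    (0 < x → x < ε → Tendsto (fun k : ℕ => poissonMass (k * x) {j | ε * k ≤ j}) atTop (𝓝 0))
  constructor
  · intro hε hεx
    have hx : 0 < x := hε.trans hεx
    have hθ : log (ε / x) < 0 := log_neg (div_pos hε hx) ((div_lt_one hx).2 hεx)
    have hlow := tendsto_poissonMass_natCast_mul_zero hx hε hεx.ne'
      (s := fun k => {j | ε * k ≤ j}ᶜ) fun k j hj =>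
        mul_le_mul_of_nonpos_left (le_of_lt (not_le.1 hj)) hθ.le
    simpa only [sub_zero] using (hlow.const_sub 1).congr fun k : ℕ =>
      (eq_sub_of_add_eq (poissonMass_add_poissonMass_compl (k * x) {j | ε * k ≤ j})).symm
  · intro hx hxε
    have hθ : 0 < log (ε / x) := log_pos ((one_lt_div hx).2 hxε)
    exact tendsto_poissonMass_natCast_mul_zero hx (hx.trans hxε) hxε.ne
      fun k j hj => mul_le_mul_of_nonneg_left hj hθ.le
end

section
/- Let γ: ℝ → ℝ be convex with γ ≤ φ where φ is smooth strictly convex, and suppose lim_{t→−∞} γ(t)/t exists and is ≥ ε (subgradient/Lelong-type condition), where ε is in the interior of the range of φ'. Then γ ≤ ψ_ε, where ψ_ε(t) = ε·t − u(ε) for t ≤ t_ε and ψ_ε(t) = φ(t) for t ≥ t_ε, with φ'(t_ε) = ε and u the Legendre transform of φ. That is, ψ_ε is the extremal envelope: the largest convex function below φ with slope at −∞ at least ε. -/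
open Filter

/-- One-variable model of Berman's extremal envelope: any convex `γ ≤ φ` whose
slope at `−∞` is at least `ε` satisfies `γ ≤ ψ_ε`, where `ψ_ε(t) = ε·t − (ε·t_ε − φ(t_ε))`
for `t ≤ t_ε` and `ψ_ε = φ` for `t ≥ t_ε`, with `φ'(t_ε) = ε`.  Thus `ψ_ε` is the
largest convex function below `φ` with slope at `−∞` at least `ε`. -/
theorem extremal_envelope_maximality
    (φ ψ γ : ℝ → ℝ) (ε tε L : ℝ)
    (hφ : ContDiff ℝ (⊤ : ℕ∞) φ)
    (hconv : ∀ t, 0 < deriv (deriv φ) t)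
    (htε : deriv φ tε = ε)
    (hψ₁ : ∀ t ≤ tε, ψ t = ε * t - (ε * tε - φ tε))
    (hψ₂ : ∀ t ≥ tε, ψ t = φ t)
    (hγconv : ConvexOn ℝ Set.univ γ)
    (hγφ : ∀ t, γ t ≤ φ t)
    (hslope : Tendsto (fun t => γ t / t) atBot (nhds L))
    (hL : ε ≤ L) :
    ∀ t, γ t ≤ ψ t := by
  intro t
  rcases le_or_gt tε t with h | h
  · rw [hψ₂ t h]; exact hγφ t
  · rw [hψ₁ t h.le]
    by_contra hcon
    push_neg at hcon
    -- hcon : ε * t - (ε * tε - φ tε) < γ t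
    set k := (γ tε - γ t) / (tε - t) with hk
    have htd : (0:ℝ) < tε - t := by linarith
    have hkε : k < ε := by
      have h1 : γ tε ≤ φ tε := hγφ tε
      have : γ tε - γ t < ε * (tε - t) := by linarith [hγφ tε]
      rw [hk, div_lt_iff₀ htd]
      linarith
    -- slope bound for s < t
    have hmono : ∀ s < t, γ t - k * (t - s) ≤ γ s := by
      intro s hs
      have := hγconv.slope_mono_adjacent (Set.mem_univ s) (Set.mem_univ tε) hs h
      have hts : (0:ℝ) < t - s := by linarith
      rw [div_le_div_iff₀ hts htd] at this
      have hk' : k * (tε - t) = γ tε - γ t := by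
        rw [hk, div_mul_cancel₀]; exact ne_of_gt htd
      nlinarith
    -- hence eventually γ s / s ≤ (γ t - k * t)/s + k
    have hev : ∀ᶠ s in atBot, γ s / s ≤ (γ t - k * t) / s + k := by
      filter_upwards [eventually_lt_atBot (min t 0)] with s hs
      have hst : s < t := lt_of_lt_of_le hs (min_le_left _ _)
      have hs0 : s < 0 := lt_of_lt_of_le hs (min_le_right _ _)
      have h1 : γ t - k * (t - s) ≤ γ s := hmono s hst
      have h2 : γ s / s ≤ (γ t - k * (t - s)) / s :=
        div_le_div_of_nonpos_of_le hs0.le h1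
      have hs0' : s ≠ 0 := ne_of_lt hs0
      have h3 : (γ t - k * (t - s)) / s = (γ t - k * t) / s + k := by
        field_simp
        ring
      linarith [h2, h3.ge, h3.le]
    have hlim : Tendsto (fun s => (γ t - k * t) / s + k) atBot (nhds k) := by
      have hinv : Tendsto (fun s : ℝ => s⁻¹) atBot (nhds 0) := by
        have h1 : Tendsto (fun s : ℝ => (-s)⁻¹) atBot (nhds (0:ℝ)) :=
          tendsto_inv_atTop_zero.comp tendsto_neg_atBot_atTop
        have h2 := h1.neg
        simp only [inv_neg, neg_neg, neg_zero] at h2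
        exact h2
      have : Tendsto (fun s : ℝ => (γ t - k * t) / s) atBot (nhds 0) := by
        simpa [div_eq_mul_inv] using Filter.Tendsto.const_mul (γ t - k * t) hinv
      simpa using this.add tendsto_const_nhds
    have : L ≤ k := le_of_tendsto_of_tendsto hslope hlim hev
    linarith
end
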